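/- arXiv:math/0209321 — 5 statements merged into one kernel-verified Lean document; each statement's English description precedes it below -/
import Mathlib

section
/- For any 4×4 matrix R̂ over a commutative ring satisfying R̂² = 2(R̂ - I), and for a function c on a multiplicative monoid, the Ansatz R̂(x) = I + c(x)·R̂ satisfies the parametrised Yang–Baxter equation R̂₁₂(x)R̂₂₃(xy)R̂₁₂(y) = R̂₂₃(y)R̂₁₂(xy)R̂₂₃(x) whenever c satisfies the functional equation c(x) + c(y) + 2c(x)c(y) = c(xy). -/
/-!
If `a² = p a + q`, the two linear terms in `a` of `(1 + s a)(1 + u b)(1 + t a)` combine to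
`(s + t + p s t) a + q s t = u a + q s t`. The expansion is then symmetric under `a ↔ b, s ↔ t`
up to the cubic term `s u t · a b a`, which the braid relation `a b a = b a b` takes care of.
The legs `R̂₁₂`, `R̂₂₃` inherit the quadratic relation of `R̂` because `M ↦ M ⊗ I₂` and
`M ↦ I₂ ⊗ M` are ring homomorphisms.
-/
open Matrix Kronecker

/-- `R̂ ⊗ I₂` as a matrix on `(V ⊗ V) ⊗ V`, where `Fin 4 ≃ Fin 2 × Fin 2`
is the standard row-major identification. -/
def leg12 {α : Type*} [CommRing α] (M : Matrix (Fin 4) (Fin 4) α) :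
    Matrix ((Fin 2 × Fin 2) × Fin 2) ((Fin 2 × Fin 2) × Fin 2) α :=
  (Matrix.reindex (finProdFinEquiv : Fin 2 × Fin 2 ≃ Fin 4).symm
    (finProdFinEquiv : Fin 2 × Fin 2 ≃ Fin 4).symm M) ⊗ₖ (1 : Matrix (Fin 2) (Fin 2) α)

/-- `I₂ ⊗ R̂` as a matrix on `(V ⊗ V) ⊗ V`, via the canonical associativity
equivalence `(V ⊗ V) ⊗ V ≃ V ⊗ (V ⊗ V)`. -/
def leg23 {α : Type*} [CommRing α] (M : Matrix (Fin 4) (Fin 4) α) :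
    Matrix ((Fin 2 × Fin 2) × Fin 2) ((Fin 2 × Fin 2) × Fin 2) α :=
  Matrix.reindex (Equiv.prodAssoc (Fin 2) (Fin 2) (Fin 2)).symm
    (Equiv.prodAssoc (Fin 2) (Fin 2) (Fin 2)).symm
    ((1 : Matrix (Fin 2) (Fin 2) α) ⊗ₖ
      (Matrix.reindex (finProdFinEquiv : Fin 2 × Fin 2 ≃ Fin 4).symm
        (finProdFinEquiv : Fin 2 × Fin 2 ≃ Fin 4).symm M))

section Baxterisation

variable {R A : Type*} [CommRing R] [Ring A] [Algebra R A]

theorem one_add_smul_mul_one_add_smul_mul_one_add_smul {a b : A} {p q s t u : R}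
    (ha : a ^ 2 = p • a + q • 1) (hu : s + t + p * (s * t) = u) :
    (1 + s • a) * (1 + u • b) * (1 + t • a) =
      1 + (q * (s * t)) • 1 + u • (a + b) + (s * u) • (a * b) + (u * t) • (b * a) +
        (s * u * t) • (a * b * a) := by
  have ha' : a * a = p • a + q • 1 := by rw [← sq, ha]
  simp only [mul_add, add_mul, one_mul, mul_one, smul_mul_assoc, mul_smul_comm,
    mul_assoc, ha']
  rw [← hu]
  module

theorem yangBaxter_of_sq_eq_of_braid {a b : A} {p q s t u : R}
    (ha : a ^ 2 = p • a + q • 1) (hb : b ^ 2 = p • b + q • 1) (hab : a * b * a = b * a * b)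
    (hu : s + t + p * (s * t) = u) :
    (1 + s • a) * (1 + u • b) * (1 + t • a) = (1 + t • b) * (1 + u • a) * (1 + s • b) := by
  have hu' : t + s + p * (t * s) = u := by linear_combination hu
  rw [one_add_smul_mul_one_add_smul_mul_one_add_smul ha hu,
    one_add_smul_mul_one_add_smul_mul_one_add_smul hb hu', hab]
  module

end Baxterisation

section Legs

variable {α : Type*} [CommRing α]

def leg12RingHom :
    Matrix (Fin 4) (Fin 4) α →+* Matrix ((Fin 2 × Fin 2) × Fin 2) ((Fin 2 × Fin 2) × Fin 2) α where
  toFun := leg12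
  map_one' := by simp [leg12, Matrix.submatrix_one_equiv]
  map_mul' M N := by
    simp [leg12, ← Matrix.mul_kronecker_mul, Matrix.submatrix_mul_equiv]
  map_zero' := by simp [leg12]
  map_add' M N := by simp [leg12, Matrix.submatrix_add, Matrix.add_kronecker]

def leg23RingHom :
    Matrix (Fin 4) (Fin 4) α →+* Matrix ((Fin 2 × Fin 2) × Fin 2) ((Fin 2 × Fin 2) × Fin 2) α where
  toFun := leg23
  map_one' := by simp [leg23, Matrix.submatrix_one_equiv]
  map_mul' M N := by
    simp [leg23, ← Matrix.mul_kronecker_mul, Matrix.submatrix_mul_equiv]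
  map_zero' := by simp [leg23]
  map_add' M N := by simp [leg23, Matrix.submatrix_add, Matrix.kronecker_add]

end Legs

theorem S03_baxterisation_general {α : Type*} [CommRing α] {M : Type*} [CommMonoid M]
    (Rhat : Matrix (Fin 4) (Fin 4) α)
    (hmin : Rhat ^ 2 = 2 • Rhat - 2 • (1 : Matrix (Fin 4) (Fin 4) α))
    (hbraid : leg12 Rhat * leg23 Rhat * leg12 Rhat = leg23 Rhat * leg12 Rhat * leg23 Rhat)
    (c : M → α)
    (hc : ∀ x y : M, c x + c y + 2 * (c x * c y) = c (x * y)) :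
    ∀ x y : M,
      (1 + c x • leg12 Rhat) * (1 + c (x * y) • leg23 Rhat) * (1 + c y • leg12 Rhat)
      = (1 + c y • leg23 Rhat) * (1 + c (x * y) • leg12 Rhat) * (1 + c x • leg23 Rhat) := by
  intro x y
  have hquad (f : Matrix (Fin 4) (Fin 4) α →+*
      Matrix ((Fin 2 × Fin 2) × Fin 2) ((Fin 2 × Fin 2) × Fin 2) α) :
      f Rhat ^ 2 = (2 : α) • f Rhat + (-2 : α) • 1 := by
    rw [← map_pow, hmin, map_sub, map_nsmul, map_nsmul, map_one]
    module
  exact yangBaxter_of_sq_eq_of_braid (hquad leg12RingHom) (hquad leg23RingHom) hbraid (hc x y)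
end

section
/- If a(x) = f(x)/f(x⁻¹) - 1 where f(x) = x⁻¹ - x + √(1-4k²)(x + x⁻¹), then a satisfies the functional equation a(xy) = (a(x) + a(y) + a(x)a(y))/(1 - k²a(x)a(y)), whenever all denominators are nonzero. -/
/-!
Writing `t = z²`, one has `z f(z⁻¹) = (1+s)t + (s-1)` and `z f(z) = (s-1)t + (s+1)`, so
`a(z) = -2(t-1)/((1+s)t + (s-1))` depends on `z²` only. For this rational function of `t`, the
numerator `a + b + ab` and, thanks to `4k² = 1 - s²`, the denominator `1 - k²ab` of the addition law
both factor over the common denominator, as `-4s(tu - 1)` and `2s((1+s)tu + (s-1))`.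
-/

section

variable {K : Type*} [Field K]

def aOfSq (s t : K) : K := -2 * (t - 1) / ((1 + s) * t + (s - 1))

variable {k s t u : K}

theorem aOfSq_add_add_mul (ht : (1 + s) * t + (s - 1) ≠ 0) (hu : (1 + s) * u + (s - 1) ≠ 0) :
    aOfSq s t + aOfSq s u + aOfSq s t * aOfSq s u =
      -4 * s * (t * u - 1) / (((1 + s) * t + (s - 1)) * ((1 + s) * u + (s - 1))) := by
  unfold aOfSq
  generalize hA : (1 + s) * t + (s - 1) = A at *
  generalize hB : (1 + s) * u + (s - 1) = B at *
  field_simp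
  subst hA hB
  ring

theorem one_sub_sq_mul_aOfSq_mul (hs : s ^ 2 = 1 - 4 * k ^ 2)
    (ht : (1 + s) * t + (s - 1) ≠ 0) (hu : (1 + s) * u + (s - 1) ≠ 0) :
    1 - k ^ 2 * (aOfSq s t * aOfSq s u) =
      2 * s * ((1 + s) * (t * u) + (s - 1)) /
        (((1 + s) * t + (s - 1)) * ((1 + s) * u + (s - 1))) := by
  unfold aOfSq
  generalize hA : (1 + s) * t + (s - 1) = A at *
  generalize hB : (1 + s) * u + (s - 1) = B at *
  field_simp
  subst hA hB
  linear_combination (-(t - 1) * (u - 1)) * hs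

theorem mul_den_ne_zero (hs : s ^ 2 = 1 - 4 * k ^ 2)
    (ht : (1 + s) * t + (s - 1) ≠ 0) (hu : (1 + s) * u + (s - 1) ≠ 0)
    (hden : 1 - k ^ 2 * (aOfSq s t * aOfSq s u) ≠ 0) :
    (1 + s) * (t * u) + (s - 1) ≠ 0 := by
  rw [one_sub_sq_mul_aOfSq_mul hs ht hu] at hden
  exact right_ne_zero_of_mul (div_ne_zero_iff.1 hden).1

theorem aOfSq_mul (hs : s ^ 2 = 1 - 4 * k ^ 2)
    (ht : (1 + s) * t + (s - 1) ≠ 0) (hu : (1 + s) * u + (s - 1) ≠ 0)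
    (hden : 1 - k ^ 2 * (aOfSq s t * aOfSq s u) ≠ 0) :
    aOfSq s (t * u) = (aOfSq s t + aOfSq s u + aOfSq s t * aOfSq s u) /
      (1 - k ^ 2 * (aOfSq s t * aOfSq s u)) := by
  rw [one_sub_sq_mul_aOfSq_mul hs ht hu] at hden ⊢
  have h2s : 2 * s ≠ 0 := left_ne_zero_of_mul (div_ne_zero_iff.1 hden).1
  rw [aOfSq_add_add_mul ht hu, div_div_div_cancel_right₀ (mul_ne_zero ht hu), aOfSq,
    show -4 * s * (t * u - 1) = 2 * s * (-2 * (t * u - 1)) by ring,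
    mul_div_mul_left _ _ h2s]

variable {f : K → K} (hf : ∀ x : K, f x = x⁻¹ - x + s * (x + x⁻¹))
include hf

theorem ne_zero_of_f_inv_ne_zero {z : K} (hz : f z⁻¹ ≠ 0) : z ≠ 0 := by
  rintro rfl
  simp [hf] at hz

theorem mul_f {z : K} (hz : z ≠ 0) : z * f z = (s - 1) * z ^ 2 + (1 + s) := by
  rw [hf]
  field_simp
  ring

theorem mul_f_inv {z : K} (hz : z ≠ 0) : z * f z⁻¹ = (1 + s) * z ^ 2 + (s - 1) := by
  rw [hf, inv_inv]
  field_simp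
  ring

theorem f_inv_ne_zero_iff {z : K} (hz : z ≠ 0) :
    f z⁻¹ ≠ 0 ↔ (1 + s) * z ^ 2 + (s - 1) ≠ 0 := by
  rw [← mul_f_inv hf hz, mul_ne_zero_iff, and_iff_right hz]

theorem div_f_inv_sub_one {z : K} (hz : z ≠ 0) (hden : (1 + s) * z ^ 2 + (s - 1) ≠ 0) :
    f z / f z⁻¹ - 1 = aOfSq s (z ^ 2) := by
  rw [← mul_div_mul_left (f z) (f z⁻¹) hz, mul_f hf hz, mul_f_inv hf hz, div_sub_one hden,
    aOfSq]
  ring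

end

theorem a_solves_functional_equation_general (k s : ℂ) (hs : s ^ 2 = 1 - 4 * k ^ 2)
    (f : ℂ → ℂ) (hf : ∀ x : ℂ, f x = x⁻¹ - x + s * (x + x⁻¹))
    (a : ℂ → ℂ) (ha : ∀ x : ℂ, a x = f x / f x⁻¹ - 1)
    (x y : ℂ)
    (hfx : f x⁻¹ ≠ 0) (hfy : f y⁻¹ ≠ 0)
    (hden : 1 - k ^ 2 * (a x * a y) ≠ 0) :
    a (x * y) = (a x + a y + a x * a y) / (1 - k ^ 2 * (a x * a y)) := by
  have hx := ne_zero_of_f_inv_ne_zero hf hfx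
  have hy := ne_zero_of_f_inv_ne_zero hf hfy
  have hdx := (f_inv_ne_zero_iff hf hx).1 hfx
  have hdy := (f_inv_ne_zero_iff hf hy).1 hfy
  rw [ha x, ha y, div_f_inv_sub_one hf hx hdx, div_f_inv_sub_one hf hy hdy] at hden ⊢
  have hdxy : (1 + s) * (x * y) ^ 2 + (s - 1) ≠ 0 := by
    rw [mul_pow]
    exact mul_den_ne_zero hs hdx hdy hden
  rw [ha, div_f_inv_sub_one hf (mul_ne_zero hx hy) hdxy, mul_pow]
  exact aOfSq_mul hs hdx hdy hden

theorem a_solves_functional_equation (k s : ℂ) (hs : s ^ 2 = 1 - 4 * k ^ 2)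
    (f : ℂ → ℂ) (hf : ∀ x : ℂ, f x = x⁻¹ - x + s * (x + x⁻¹))
    (a : ℂ → ℂ) (ha : ∀ x : ℂ, a x = f x / f x⁻¹ - 1)
    (x y : ℂ) (hx : x ≠ 0) (hy : y ≠ 0)
    (hfx : f x⁻¹ ≠ 0) (hfy : f y⁻¹ ≠ 0) (hfxy : f (x * y)⁻¹ ≠ 0)
    (hden : 1 - k ^ 2 * (a x * a y) ≠ 0) :
    a (x * y) = (a x + a y + a x * a y) / (1 - k ^ 2 * (a x * a y)) :=
  a_solves_functional_equation_general k s hs f hf a ha x y hfx hfy hden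
end

section
/- The braid matrix R̂ of S14 satisfies the minimal polynomial identity (R̂ - I)(R̂ - qI)(R̂ + qI) = 0, and no polynomial identity of lower degree: R̂² ∉ span{I, R̂} when q² ≠ 1 and q ≠ 0 (in particular (R̂-I)(R̂-qI) ≠ 0, (R̂-I)(R̂+qI) ≠ 0, (R̂-qI)(R̂+qI) ≠ 0). -/
/-!
`R̂` fixes `e₂` and `e₃` and acts on `span {e₁, e₄}` as `q` times the swap, so its eigenvalues
are `1`, `q` (eigenvector `e₁ + e₄`) and `-q` (eigenvector `e₁ - e₄`). Each proper subproduct of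
`(R̂ - 1)(R̂ - q)(R̂ + q)` multiplies the eigenvector of the missing eigenvalue by a nonzero scalar,
and a relation `R̂² = a + b R̂` would give the monic quadratic `X² - b X - a` the three distinct
roots `1, q, -q`.
-/

open Matrix

namespace Matrix

variable {n K : Type*} [Fintype n]

theorem mul_ne_zero_of_mulVec_eq_smul [Field K] {B C : Matrix n n K} {v : n → K} (hv : v ≠ 0)
    {b c : K} (hB : B *ᵥ v = b • v) (hC : C *ᵥ v = c • v) (hb : b ≠ 0) (hc : c ≠ 0) :
    B * C ≠ 0 := by
  intro hBC
  have hv0 : (b * c) • v = 0 := by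
    rw [← zero_mulVec v, ← hBC, ← mulVec_mulVec, hC, mulVec_smul, hB, smul_smul, mul_comm]
  exact hv (smul_eq_zero.mp hv0 |>.resolve_left (mul_ne_zero hb hc))

variable [DecidableEq n]

theorem sub_smul_one_mulVec_of_mulVec_eq_smul [CommRing K] {A : Matrix n n K} {v : n → K}
    {μ : K} (h : A *ᵥ v = μ • v) (a : K) : (A - a • 1) *ᵥ v = (μ - a) • v := by
  rw [sub_mulVec, h, smul_mulVec, one_mulVec, sub_smul]

theorem sub_one_mulVec_of_mulVec_eq_smul [CommRing K] {A : Matrix n n K} {v : n → K}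
    {μ : K} (h : A *ᵥ v = μ • v) : (A - 1) *ᵥ v = (μ - 1) • v := by
  simpa using sub_smul_one_mulVec_of_mulVec_eq_smul h 1

theorem add_smul_one_mulVec_of_mulVec_eq_smul [CommRing K] {A : Matrix n n K} {v : n → K}
    {μ : K} (h : A *ᵥ v = μ • v) (a : K) : (A + a • 1) *ᵥ v = (μ + a) • v := by
  rw [add_mulVec, h, smul_mulVec, one_mulVec, add_smul]

variable [Field K]

theorem eigenvalue_sq_eq_of_sq_eq {A : Matrix n n K} {a b : K} (hA : A ^ 2 = a • 1 + b • A)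
    {v : n → K} (hv : v ≠ 0) {μ : K} (h : A *ᵥ v = μ • v) : μ ^ 2 = a + b * μ := by
  have hAv : (A ^ 2) *ᵥ v = μ ^ 2 • v := by
    rw [sq, ← mulVec_mulVec, h, mulVec_smul, h, smul_smul, sq]
  rw [hA, add_mulVec, smul_mulVec, one_mulVec, smul_mulVec, h, smul_smul, ← add_smul] at hAv
  exact smul_left_injective K hv hAv.symm

end Matrix

section S14

variable {K : Type*}

def S14Rhat [CommRing K] (q : K) : Matrix (Fin 4) (Fin 4) K :=
  !![0,0,0,q; 0,1,0,0; 0,0,1,0; q,0,0,0]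

theorem S14Rhat_cubic_eq_zero [CommRing K] (q : K) :
    (S14Rhat q - 1) * (S14Rhat q - q • 1) * (S14Rhat q + q • 1) = 0 := by
  ext i j
  fin_cases i <;> fin_cases j <;>
    simp [S14Rhat, mul_apply, Fin.sum_univ_four, one_apply] <;> ring

theorem S14Rhat_mulVec_e₂ [CommRing K] (q : K) :
    S14Rhat q *ᵥ ![0, 1, 0, 0] = (1 : K) • ![0, 1, 0, 0] := by
  ext i; fin_cases i <;> simp [S14Rhat, mulVec, dotProduct, Fin.sum_univ_four]

theorem S14Rhat_mulVec_e₁_add_e₄ [CommRing K] (q : K) :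
    S14Rhat q *ᵥ ![1, 0, 0, 1] = q • ![1, 0, 0, 1] := by
  ext i; fin_cases i <;> simp [S14Rhat, mulVec, dotProduct, Fin.sum_univ_four]

theorem S14Rhat_mulVec_e₁_sub_e₄ [CommRing K] (q : K) :
    S14Rhat q *ᵥ ![1, 0, 0, -1] = (-q) • ![1, 0, 0, -1] := by
  ext i; fin_cases i <;> simp [S14Rhat, mulVec, dotProduct, Fin.sum_univ_four]

variable [Field K]

theorem S14Rhat_sq_ne_smul_one_add_smul [NeZero (2 : K)] {q : K} (hq0 : q ≠ 0) (hq1 : q ^ 2 ≠ 1)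
    (a b : K) :
    S14Rhat q ^ 2 ≠ a • 1 + b • S14Rhat q := by
  intro h
  have h_fix := eigenvalue_sq_eq_of_sq_eq h (Function.ne_iff.mpr ⟨1, by simp⟩)
    (S14Rhat_mulVec_e₂ q)
  have h_sym := eigenvalue_sq_eq_of_sq_eq h (Function.ne_iff.mpr ⟨0, by simp⟩)
    (S14Rhat_mulVec_e₁_add_e₄ q)
  have h_anti := eigenvalue_sq_eq_of_sq_eq h (Function.ne_iff.mpr ⟨0, by simp⟩)
    (S14Rhat_mulVec_e₁_sub_e₄ q)
  have hb : b = 0 := by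
    have : (2 * q) * b = 0 := by linear_combination h_anti - h_sym
    exact (mul_eq_zero.mp this).resolve_left (mul_ne_zero two_ne_zero hq0)
  exact hq1 (by linear_combination h_sym - h_fix + (q - 1) * hb)

end S14

theorem S14_minimal_polynomial (q : ℂ) (hq0 : q ≠ 0) (hq1 : q ^ 2 ≠ 1) :
    let Rhat : Matrix (Fin 4) (Fin 4) ℂ :=
      !![0,0,0,q; 0,1,0,0; 0,0,1,0; q,0,0,0]
    let I1 : Matrix (Fin 4) (Fin 4) ℂ := 1
    (Rhat - I1) * (Rhat - q • I1) * (Rhat + q • I1) = 0 ∧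
    (¬ ∃ a b : ℂ, Rhat ^ 2 = a • I1 + b • Rhat) ∧
    (Rhat - I1) * (Rhat - q • I1) ≠ 0 ∧
    (Rhat - I1) * (Rhat + q • I1) ≠ 0 ∧
    (Rhat - q • I1) * (Rhat + q • I1) ≠ 0 := by
  intro Rhat I1
  have hq_sub_one : q - 1 ≠ 0 := fun h => hq1 (by linear_combination (q + 1) * h)
  have hq_add_one : q + 1 ≠ 0 := fun h => hq1 (by linear_combination (q - 1) * h)
  have htwo_q : q + q ≠ 0 := by simpa [← two_mul] using hq0
  have hv_fix : ![(0 : ℂ), 1, 0, 0] ≠ 0 := Function.ne_iff.mpr ⟨1, by simp⟩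
  have hv_sym : ![(1 : ℂ), 0, 0, 1] ≠ 0 := Function.ne_iff.mpr ⟨0, by simp⟩
  have hv_anti : ![(1 : ℂ), 0, 0, -1] ≠ 0 := Function.ne_iff.mpr ⟨0, by simp⟩
  have hR_fix := S14Rhat_mulVec_e₂ q
  have hR_sym := S14Rhat_mulVec_e₁_add_e₄ q
  have hR_anti := S14Rhat_mulVec_e₁_sub_e₄ q
  refine ⟨S14Rhat_cubic_eq_zero q, fun ⟨a, b, h⟩ => S14Rhat_sq_ne_smul_one_add_smul hq0 hq1 a b h,
    ?_, ?_, ?_⟩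
  · refine mul_ne_zero_of_mulVec_eq_smul hv_anti (sub_one_mulVec_of_mulVec_eq_smul hR_anti)
      (sub_smul_one_mulVec_of_mulVec_eq_smul hR_anti q) ?_ ?_
    · exact fun h => hq_add_one (by linear_combination -h)
    · exact fun h => htwo_q (by linear_combination -h)
  · refine mul_ne_zero_of_mulVec_eq_smul hv_sym (sub_one_mulVec_of_mulVec_eq_smul hR_sym)
      (add_smul_one_mulVec_of_mulVec_eq_smul hR_sym q) ?_ htwo_q
    simpa using hq_sub_one
  · refine mul_ne_zero_of_mulVec_eq_smul hv_fix (sub_smul_one_mulVec_of_mulVec_eq_smul hR_fix q)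
      (add_smul_one_mulVec_of_mulVec_eq_smul hR_fix q) ?_ ?_
    · exact fun h => hq_sub_one (by linear_combination -h)
    · exact fun h => hq_add_one (by linear_combination h)
end

section
/- For the S14 braid matrix R̂, the matrices P₀ = (1-q²)⁻¹(R̂-qI)(R̂+qI), P₊ = (2q(q-1))⁻¹(R̂+qI)(R̂-I), P₋ = (2q(q+1))⁻¹(R̂-qI)(R̂-I) are given explicitly by P₀ = diag-block matrix with rows (0,0,0,0),(0,1,0,0),(0,0,1,0),(0,0,0,0); P₊ = (1/2)·[[1,0,0,1],[0,0,0,0],[0,0,0,0],[1,0,0,1]]; P₋ = (1/2)·[[1,0,0,-1],[0,0,0,0],[0,0,0,0],[-1,0,0,1]]; in particular they are independent of q. -/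
/-!
The three matrices `P₀, P₊, P₋` form a complete family of orthogonal idempotents and
`R̂ = P₀ + q P₊ - q P₋`. Hence any product `(R̂ - a)(R̂ - b)` acts on the image of each `Pᵢ` as a
scalar, and when `a, b` are the two eigenvalues other than that of `Pᵢ` it is
`Pᵢ` times the nonzero scalar produced by Lagrange interpolation.
-/

open Matrix

section Interpolation

variable {K A ι : Type*} [Field K] [Ring A] [Algebra K A] [Fintype ι]
  {e : ι → A} {c : ι → K} {R : A}

theorem OrthogonalIdempotents.sub_smul_one_mul_of_eq_sum (he : OrthogonalIdempotents e)
    (hR : R = ∑ j, c j • e j) (μ : K) (i : ι) :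
    (R - μ • 1) * e i = (c i - μ) • e i := by
  classical
  simp only [hR, sub_mul, Finset.sum_mul, smul_mul_assoc, he.mul_eq, smul_ite, smul_zero,
    Finset.sum_ite_eq', Finset.mem_univ, if_true, one_mul, sub_smul]

theorem CompleteOrthogonalIdempotents.sub_smul_one_mul_sub_smul_one
    (he : CompleteOrthogonalIdempotents e) (hR : R = ∑ j, c j • e j) (a b : K) :
    (R - a • 1) * (R - b • 1) = ∑ i, ((c i - a) * (c i - b)) • e i := by
  calc (R - a • 1) * (R - b • 1) = (R - a • 1) * (R - b • 1) * ∑ i, e i := by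
        rw [he.complete, mul_one]
    _ = _ := by
      rw [Finset.mul_sum]
      refine Finset.sum_congr rfl fun i _ => ?_
      rw [mul_assoc, he.toOrthogonalIdempotents.sub_smul_one_mul_of_eq_sum hR, mul_smul_comm,
        he.toOrthogonalIdempotents.sub_smul_one_mul_of_eq_sum hR, smul_smul, mul_comm]

theorem CompleteOrthogonalIdempotents.inv_smul_sub_smul_one_mul_sub_smul_one
    (he : CompleteOrthogonalIdempotents e) (hR : R = ∑ j, c j • e j) {a b d : K} {i : ι}
    (hother : ∀ j ≠ i, c j = a ∨ c j = b) (hd : (c i - a) * (c i - b) = d) (hd0 : d ≠ 0) :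
    d⁻¹ • ((R - a • 1) * (R - b • 1)) = e i := by
  rw [he.sub_smul_one_mul_sub_smul_one hR, Finset.sum_eq_single i, hd, inv_smul_smul₀ hd0]
  · intro j _ hji
    rcases hother j hji with h | h <;> simp [h]
  · simp

end Interpolation

section S14

variable (K : Type*) [Field K]

def s14BraidMatrix (q : K) : Matrix (Fin 4) (Fin 4) K :=
  !![0,0,0,q; 0,1,0,0; 0,0,1,0; q,0,0,0]

def s14Projector : Fin 3 → Matrix (Fin 4) (Fin 4) K :=
  ![!![0,0,0,0; 0,1,0,0; 0,0,1,0; 0,0,0,0],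
    (1/2 : K) • !![1,0,0,1; 0,0,0,0; 0,0,0,0; 1,0,0,1],
    (1/2 : K) • !![1,0,0,-1; 0,0,0,0; 0,0,0,0; -1,0,0,1]]

variable [NeZero (2 : K)]

theorem completeOrthogonalIdempotents_s14Projector :
    CompleteOrthogonalIdempotents (s14Projector K) := by
  have h2 : (2 : K) ≠ 0 := two_ne_zero
  refine ⟨OrthogonalIdempotents.iff_mul_eq.mpr fun i j => ?_, ?_⟩
  · fin_cases i <;> fin_cases j <;> ext a b <;> fin_cases a <;> fin_cases b <;>
      simp [s14Projector, Matrix.mul_apply, Fin.sum_univ_four] <;> field_simp <;> ring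
  · ext a b; fin_cases a <;> fin_cases b <;>
      simp [s14Projector, Fin.sum_univ_three] <;> field_simp <;> ring

theorem s14BraidMatrix_eq_sum_smul_s14Projector (q : K) :
    s14BraidMatrix K q = ∑ i, ![1, q, -q] i • s14Projector K i := by
  have h2 : (2 : K) ≠ 0 := two_ne_zero
  ext a b; fin_cases a <;> fin_cases b <;>
    simp [s14BraidMatrix, s14Projector, Fin.sum_univ_three] <;> field_simp <;> ring

end S14

theorem S14_projectors_explicit (q : ℂ) (hq0 : q ≠ 0) (hq1 : q ≠ 1) (hqm1 : q ≠ -1) :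
    let Rhat : Matrix (Fin 4) (Fin 4) ℂ :=
      !![0,0,0,q; 0,1,0,0; 0,0,1,0; q,0,0,0]
    let I1 : Matrix (Fin 4) (Fin 4) ℂ := 1
    (1 - q ^ 2)⁻¹ • ((Rhat - q • I1) * (Rhat + q • I1))
        = !![0,0,0,0; 0,1,0,0; 0,0,1,0; 0,0,0,0] ∧
    (2 * q * (q - 1))⁻¹ • ((Rhat + q • I1) * (Rhat - I1))
        = (1/2 : ℂ) • !![1,0,0,1; 0,0,0,0; 0,0,0,0; 1,0,0,1] ∧
    (2 * q * (q + 1))⁻¹ • ((Rhat - q • I1) * (Rhat - I1))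
        = (1/2 : ℂ) • !![1,0,0,-1; 0,0,0,0; 0,0,0,0; -1,0,0,1] := by
  intro Rhat I1
  have he := completeOrthogonalIdempotents_s14Projector ℂ
  have hR := s14BraidMatrix_eq_sum_smul_s14Projector ℂ q
  have hq1' : q - 1 ≠ 0 := sub_ne_zero.mpr hq1
  have hqm1' : q + 1 ≠ 0 := fun h => hqm1 (eq_neg_of_add_eq_zero_left h)
  have hplus : Rhat + q • I1 = Rhat - (-q) • I1 := by rw [neg_smul, sub_neg_eq_add]
  have hminus : Rhat - I1 = Rhat - (1 : ℂ) • I1 := by rw [one_smul]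
  rw [hplus, hminus]
  refine ⟨?_, ?_, ?_⟩
  · refine he.inv_smul_sub_smul_one_mul_sub_smul_one (i := 0) hR
      (by intro j hj; fin_cases j <;> simp_all) (by dsimp; ring) ?_
    rw [show (1 : ℂ) - q ^ 2 = -((q - 1) * (q + 1)) by ring]
    exact neg_ne_zero.mpr (mul_ne_zero hq1' hqm1')
  · exact he.inv_smul_sub_smul_one_mul_sub_smul_one (i := 1) hR
      (by intro j hj; fin_cases j <;> simp_all) (by dsimp; ring)
      (mul_ne_zero (mul_ne_zero two_ne_zero hq0) hq1')
  · exact he.inv_smul_sub_smul_one_mul_sub_smul_one (i := 2) hR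
      (by intro j hj; fin_cases j <;> simp_all) (by dsimp; ring)
      (mul_ne_zero (mul_ne_zero two_ne_zero hq0) hqm1')
end

section
/- For the S14 case, the parametrised Yang–Baxter equation R̂₁₂(q)R̂₂₃(q')R̂₁₂(q'') = R̂₂₃(q'')R̂₁₂(q')R̂₂₃(q) holds for all triples of scalars (q, q', q'') without any constraints relating them. -/
open Matrix Kronecker

/-- The `S14` braid matrix. -/
def RhatS14 {α : Type*} [CommRing α] (q : α) : Matrix (Fin 4) (Fin 4) α :=
  !![0,0,0,q; 0,1,0,0; 0,0,1,0; q,0,0,0]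


private lemma fp00 : (finProdFinEquiv : Fin 2 × Fin 2 ≃ Fin 4) (0,0) = (0 : Fin 4) := rfl
private lemma fp01 : (finProdFinEquiv : Fin 2 × Fin 2 ≃ Fin 4) (0,1) = (1 : Fin 4) := rfl
private lemma fp10 : (finProdFinEquiv : Fin 2 × Fin 2 ≃ Fin 4) (1,0) = (2 : Fin 4) := rfl
private lemma fp11 : (finProdFinEquiv : Fin 2 × Fin 2 ≃ Fin 4) (1,1) = (3 : Fin 4) := rfl
private lemma fpZ : (finProdFinEquiv : Fin 2 × Fin 2 ≃ Fin 4) 0 = (0 : Fin 4) := rfl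
private lemma fpO : (finProdFinEquiv : Fin 2 × Fin 2 ≃ Fin 4) 1 = (3 : Fin 4) := rfl

set_option maxHeartbeats 4000000 in
theorem S14_unconstrained_YBE {α : Type*} [CommRing α] (q q' q'' : α) :
    leg12 (RhatS14 q) * leg23 (RhatS14 q') * leg12 (RhatS14 q'')
      = leg23 (RhatS14 q'') * leg12 (RhatS14 q') * leg23 (RhatS14 q) := by
  ext ⟨⟨a,b⟩,c⟩ ⟨⟨d,e⟩,f⟩
  simp only [leg12, leg23, RhatS14, mul_apply, Fintype.sum_prod_type, Fin.sum_univ_two,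
    reindex_apply, submatrix_apply, kroneckerMap_apply, Equiv.prodAssoc, Equiv.coe_fn_mk,
    Equiv.coe_fn_symm_mk, Equiv.symm_symm]
  fin_cases a <;> fin_cases b <;> fin_cases c <;> fin_cases d <;> fin_cases e <;> fin_cases f <;>
  · norm_num [fp00, fp01, fp10, fp11, fpZ, fpO, Matrix.one_apply, Matrix.vecHead, Matrix.vecTail, Function.comp]
    simp -failIfUnchanged only [Matrix.cons_val]
    try ring
end
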